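/- arXiv:1907.02317 — 9 statements merged into one kernel-verified Lean document; each statement's English description precedes it below -/
import Mathlib

section
/- Let 𝒫 be a nonempty set of probability measures on a measurable space (Ω, ℱ). Let g₁, g₂ : Ω → ℝ be measurable functions with g₁(ω) > 0 for all ω, suppose ∫ g₁ dP = 1 for every P ∈ 𝒫, and suppose g₁·g₂, g₁·log g₁ and exp(g₂) are P-integrable for every P ∈ 𝒫, with sup_{P∈𝒫} ∫ g₁ log g₁ dP < ∞ and sup_{P∈𝒫} ∫ exp(g₂) dP < ∞. Then sup_{P∈𝒫} ∫ g₁ g₂ dP ≤ sup_{P∈𝒫} ∫ g₁ log g₁ dP + log( sup_{P∈𝒫} ∫ exp(g₂) dP ). -/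
open MeasureTheory

lemma young_aux (a b : ℝ) (ha : 0 < a) :
    a * b ≤ a * Real.log a + Real.exp b - a := by
  have h := Real.add_one_le_exp (b - Real.log a)
  have h1 := mul_le_mul_of_nonneg_left h ha.le
  have h2 : a * Real.exp (b - Real.log a) = Real.exp b := by
    nth_rewrite 1 [← Real.exp_log ha]
    rw [← Real.exp_add]
    ring_nf
  nlinarith

/-- Young inequality under a sublinear (upper) expectation. -/
theorem young_inequality_upper_expectation
    {Ω : Type*} [MeasurableSpace Ω] (Ps : Set (Measure Ω)) (hPs : Ps.Nonempty)
    (hprob : ∀ P ∈ Ps, IsProbabilityMeasure P)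
    (g₁ g₂ : Ω → ℝ) (hg₁ : Measurable g₁) (hg₂ : Measurable g₂)
    (hg₁pos : ∀ ω, 0 < g₁ ω)
    (hg₁int : ∀ P ∈ Ps, ∫ ω, g₁ ω ∂P = 1)
    (hint₁ : ∀ P ∈ Ps, Integrable (fun ω => g₁ ω * g₂ ω) P)
    (hint₂ : ∀ P ∈ Ps, Integrable (fun ω => g₁ ω * Real.log (g₁ ω)) P)
    (hint₃ : ∀ P ∈ Ps, Integrable (fun ω => Real.exp (g₂ ω)) P)
    (hbdd₂ : BddAbove (Set.range fun P : Ps => ∫ ω, g₁ ω * Real.log (g₁ ω) ∂(P : Measure Ω)))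
    (hbdd₃ : BddAbove (Set.range fun P : Ps => ∫ ω, Real.exp (g₂ ω) ∂(P : Measure Ω))) :
    (⨆ P : Ps, ∫ ω, g₁ ω * g₂ ω ∂(P : Measure Ω)) ≤
      (⨆ P : Ps, ∫ ω, g₁ ω * Real.log (g₁ ω) ∂(P : Measure Ω)) +
        Real.log (⨆ P : Ps, ∫ ω, Real.exp (g₂ ω) ∂(P : Measure Ω)) := by
  haveI : Nonempty Ps := hPs.to_subtype
  set M := ⨆ P : Ps, ∫ ω, Real.exp (g₂ ω) ∂(P : Measure Ω) with hMdef
  -- M positive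
  obtain ⟨P₀, hP₀⟩ := hPs
  have hMpos : 0 < M := by
    haveI := hprob P₀ hP₀
    have hpos : 0 < ∫ ω, Real.exp (g₂ ω) ∂P₀ := by
      rw [integral_pos_iff_support_of_nonneg (fun ω => (Real.exp_pos _).le) (hint₃ P₀ hP₀)]
      have : Function.support (fun ω => Real.exp (g₂ ω)) = Set.univ := by
        ext ω; simp [Function.mem_support, (Real.exp_pos _).ne']
      rw [this]; simp
    calc (0:ℝ) < ∫ ω, Real.exp (g₂ ω) ∂P₀ := hpos
      _ ≤ M := le_ciSup hbdd₃ ⟨P₀, hP₀⟩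
  apply ciSup_le
  intro P
  obtain ⟨P, hP⟩ := P
  haveI := hprob P hP
  -- g₁ integrable
  have hg₁i : Integrable g₁ P := by
    apply Integrable.mono' (((hint₂ P hP).add (integrable_const (Real.exp 1))).div_const 2)
      hg₁.aestronglyMeasurable
    filter_upwards with ω
    have := young_aux (g₁ ω) 1 (hg₁pos ω)
    rw [Real.norm_eq_abs, abs_of_pos (hg₁pos ω)]
    simp only [Pi.add_apply, Pi.div_apply]
    linarith
  have hMint : ∫ ω, Real.exp (g₂ ω) ∂P ≤ M := le_ciSup hbdd₃ ⟨P, hP⟩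
  -- pointwise inequality
  have hptw : ∀ ω, g₁ ω * g₂ ω ≤
      g₁ ω * Real.log (g₁ ω) + Real.exp (g₂ ω) / M - g₁ ω + g₁ ω * Real.log M := by
    intro ω
    have h := young_aux (g₁ ω) (g₂ ω - Real.log M) (hg₁pos ω)
    rw [Real.exp_sub, Real.exp_log hMpos] at h
    nlinarith
  have i0 : Integrable (fun ω => g₁ ω * Real.log (g₁ ω) + Real.exp (g₂ ω) / M) P :=
    (hint₂ P hP).add ((hint₃ P hP).div_const M)
  have i1 : Integrable (fun ω => g₁ ω * Real.log (g₁ ω) + Real.exp (g₂ ω) / M - g₁ ω) P :=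
    i0.sub hg₁i
  have i2 : Integrable (fun ω => g₁ ω * Real.log M) P := by
    simpa [mul_comm] using hg₁i.const_mul (Real.log M)
  have hRHSint : Integrable (fun ω => g₁ ω * Real.log (g₁ ω) + Real.exp (g₂ ω) / M - g₁ ω
      + g₁ ω * Real.log M) P := i1.add i2
  have hmono := integral_mono (hint₁ P hP) hRHSint hptw
  have hcalc : ∫ ω, (g₁ ω * Real.log (g₁ ω) + Real.exp (g₂ ω) / M - g₁ ω
      + g₁ ω * Real.log M) ∂P
      = ∫ ω, g₁ ω * Real.log (g₁ ω) ∂P + (∫ ω, Real.exp (g₂ ω) ∂P) / M - 1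
      + Real.log M := by
    rw [integral_add i1 i2, integral_sub i0 hg₁i,
      integral_add (hint₂ P hP) ((hint₃ P hP).div_const M),
      integral_div, hg₁int P hP]
    have : ∫ ω, g₁ ω * Real.log M ∂P = Real.log M := by
      rw [integral_mul_const, hg₁int P hP, one_mul]
    rw [this]
  rw [hcalc] at hmono
  have hdiv : (∫ ω, Real.exp (g₂ ω) ∂P) / M ≤ 1 := by
    rw [div_le_one hMpos]; exact hMint
  have hsup2 : ∫ ω, g₁ ω * Real.log (g₁ ω) ∂P ≤
      ⨆ P : Ps, ∫ ω, g₁ ω * Real.log (g₁ ω) ∂(P : Measure Ω) := le_ciSup hbdd₂ ⟨P, hP⟩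
  linarith
end

section
/- Let κ₂ > κ₁ > 0 and α > 0. Set a = α²κ₁² / (4(κ₂−κ₁)² + 4α(κ₂−κ₁)κ₁) and q = 1 + √(1 + 1/a). Then a·q·(a·q + 1)/(2κ₁²(q−1)) = (a + √(a(a+1)))²/(2κ₁²) = α²/(8(κ₂−κ₁)²), and (q−1)/q = (ακ₁ + 2(κ₂−κ₁))/(2ακ₁ + 2(κ₂−κ₁)). -/
/-!
With `c = ακ₁` and `d = κ₂ − κ₁` one has `a = c² / (4d(c + d))`, so `1 + 1/a = ((c + 2d)/c)²` is a
perfect square and all square roots disappear. Writing `s = √(1 + 1/a)`, the relation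
`a + 1 = a s²` gives `√(a(a+1)) = a s` and `aq + 1 = aq · s`, which reduces the first identity to
`(aq)²`; finally `aq = a(2c + 2d)/c = c/(2d)`.
-/

open Real

lemma sqrt_mul_add_one_eq_mul_sqrt {a : ℝ} (ha : 0 < a) :
    √(a * (a + 1)) = a * √(1 + 1 / a) := by
  have h : a * (a + 1) = a ^ 2 * (1 + 1 / a) := by field_simp
  rw [h, sqrt_mul (sq_nonneg a), sqrt_sq ha.le]

lemma mul_mul_add_one_div_sub_one {a : ℝ} (ha : 0 < a) (C : ℝ) :
    let q := 1 + √(1 + 1 / a)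
    a * q * (a * q + 1) / (C * (q - 1)) = (a + √(a * (a + 1))) ^ 2 / C := by
  intro q
  have hs0 : 0 < √(1 + 1 / a) := sqrt_pos.2 (by positivity)
  have hs2 : a + 1 = a * √(1 + 1 / a) ^ 2 := by
    rw [sq_sqrt (by positivity)]
    field_simp
  rcases eq_or_ne C 0 with rfl | hC
  · simp
  simp only [q, add_sub_cancel_left, sqrt_mul_add_one_eq_mul_sqrt ha]
  generalize √(1 + 1 / a) = s at hs0 hs2 ⊢
  field_simp
  linear_combination hs2

noncomputable def momentExponent (c d : ℝ) : ℝ := c ^ 2 / (4 * d ^ 2 + 4 * d * c)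

lemma momentExponent_pos {c d : ℝ} (hc : 0 < c) (hd : 0 < d) : 0 < momentExponent c d := by
  unfold momentExponent
  positivity

lemma sqrt_one_add_one_div_momentExponent {c d : ℝ} (hc : 0 < c) (hd : 0 < d) :
    √(1 + 1 / momentExponent c d) = (c + 2 * d) / c := by
  have h : 1 + 1 / momentExponent c d = ((c + 2 * d) / c) ^ 2 := by
    unfold momentExponent
    field_simp
    ring
  rw [h, sqrt_sq (by positivity)]

lemma momentExponent_add_sqrt {c d : ℝ} (hc : 0 < c) (hd : 0 < d) :
    momentExponent c d + √(momentExponent c d * (momentExponent c d + 1)) = c / (2 * d) := by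
  rw [sqrt_mul_add_one_eq_mul_sqrt (momentExponent_pos hc hd),
    sqrt_one_add_one_div_momentExponent hc hd, momentExponent]
  field_simp
  ring

/-- Key algebraic identities in Lemma 3.9: with
`a = α²κ₁²/(4(κ₂−κ₁)² + 4α(κ₂−κ₁)κ₁)` and `q = 1 + √(1 + 1/a)` one has
`aq(aq+1)/(2κ₁²(q−1)) = (a + √(a(a+1)))²/(2κ₁²) = α²/(8(κ₂−κ₁)²)` and
`(q−1)/q = (ακ₁ + 2(κ₂−κ₁))/(2ακ₁ + 2(κ₂−κ₁))`. -/
theorem moment_exponent_identities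
    (κ₁ κ₂ α : ℝ) (hκ₁ : 0 < κ₁) (hκ : κ₁ < κ₂) (hα : 0 < α) :
    let a : ℝ := α ^ 2 * κ₁ ^ 2 / (4 * (κ₂ - κ₁) ^ 2 + 4 * α * (κ₂ - κ₁) * κ₁)
    let q : ℝ := 1 + Real.sqrt (1 + 1 / a)
    a * q * (a * q + 1) / (2 * κ₁ ^ 2 * (q - 1)) =
        (a + Real.sqrt (a * (a + 1))) ^ 2 / (2 * κ₁ ^ 2) ∧
      (a + Real.sqrt (a * (a + 1))) ^ 2 / (2 * κ₁ ^ 2) = α ^ 2 / (8 * (κ₂ - κ₁) ^ 2) ∧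
      (q - 1) / q = (α * κ₁ + 2 * (κ₂ - κ₁)) / (2 * α * κ₁ + 2 * (κ₂ - κ₁)) := by
  intro a q
  have hc : 0 < α * κ₁ := by positivity
  have hd : 0 < κ₂ - κ₁ := sub_pos.2 hκ
  have ha : a = momentExponent (α * κ₁) (κ₂ - κ₁) := by
    simp only [a, momentExponent]
    ring
  refine ⟨mul_mul_add_one_div_sub_one (ha ▸ momentExponent_pos hc hd) _, ?_, ?_⟩
  · rw [ha, momentExponent_add_sqrt hc hd]
    field_simp
    ring
  · simp only [q, ha, sqrt_one_add_one_div_momentExponent hc hd]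
    field_simp
    ring
end

section
/- Let T > 0, c > 0, and let f : [0, T] → ℝ be continuous. If the integral ∫_{[0,T)} f(t)² / (1 − exp(c(t − T)))² dt is finite, then f(T) = 0. -/
open MeasureTheory

/-- Deterministic core of Lemma 3.8: if `f` is continuous on `[0,T]` and
`∫_{[0,T)} f(t)²/(1 − e^{c(t−T)})² dt < ∞`, then `f(T) = 0`. -/
theorem continuous_vanishes_at_endpoint_of_integrable
    (T c : ℝ) (hT : 0 < T) (hc : 0 < c) (f : ℝ → ℝ)
    (hf : ContinuousOn f (Set.Icc 0 T))
    (hint : IntegrableOn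
      (fun t => f t ^ 2 / (1 - Real.exp (c * (t - T))) ^ 2) (Set.Ico 0 T) volume) :
    f T = 0 := by
  by_contra hfT
  set ε : ℝ := f T ^ 2 / 2 with hεdef
  have hε : 0 < ε := by positivity
  -- continuity gives a neighborhood where f t ^ 2 > ε
  have hct : ContinuousWithinAt (fun t => f t ^ 2) (Set.Icc 0 T) T :=
    (hf T (Set.right_mem_Icc.2 hT.le)).pow 2
  have hev : ∀ᶠ t in nhdsWithin T (Set.Icc 0 T), ε < f t ^ 2 := by
    have : Set.Ioi ε ∈ nhds (f T ^ 2) := by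
      apply Ioi_mem_nhds
      have : 0 < f T ^ 2 := by positivity
      linarith
    exact hct this
  rw [Filter.eventually_iff, Metric.mem_nhdsWithin_iff] at hev
  obtain ⟨δ, hδ, hball'⟩ := hev
  have hball : ∀ t, dist t T < δ → t ∈ Set.Icc 0 T → ε < f t ^ 2 := fun t h1 h2 =>
    hball' ⟨Metric.mem_ball.2 h1, h2⟩
  set a : ℝ := max (T - δ / 2) 0 with hadef
  have haT : a < T := by
    apply max_lt
    · linarith
    · exact hT
  have ha0 : 0 ≤ a := le_max_right _ _
  -- on Ico a T, the integrand dominates ε / (c^2 * (T-t)^2)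
  have key : ∀ t ∈ Set.Ico a T,
      ((T - t) ^ 2)⁻¹ ≤ (c ^ 2 / ε) * (f t ^ 2 / (1 - Real.exp (c * (t - T))) ^ 2) := by
    intro t ht
    have ht0 : 0 ≤ t := le_trans ha0 ht.1
    have htT : t < T := ht.2
    have hdist : dist t T < δ := by
      rw [Real.dist_eq, abs_of_nonpos (by linarith)]
      have : T - δ / 2 ≤ a := le_max_left _ _
      have := ht.1
      linarith
    have hft : ε < f t ^ 2 := hball t hdist ⟨ht0, htT.le⟩
    have hxneg : c * (t - T) < 0 := mul_neg_of_pos_of_neg hc (by linarith)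
    have h1 : 0 < 1 - Real.exp (c * (t - T)) := by
      have := Real.exp_lt_one_iff.2 hxneg
      linarith
    have h2 : 1 - Real.exp (c * (t - T)) ≤ c * (T - t) := by
      have := Real.add_one_le_exp (c * (t - T))
      nlinarith
    have hTt : 0 < T - t := by linarith
    have hsq : (1 - Real.exp (c * (t - T))) ^ 2 ≤ c ^ 2 * (T - t) ^ 2 := by nlinarith
    have hsqpos : 0 < (1 - Real.exp (c * (t - T))) ^ 2 := by positivity
    rw [div_mul_div_comm, le_div_iff₀ (by positivity), inv_mul_eq_div,
      div_le_iff₀ (by positivity)]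
    nlinarith [mul_le_mul hft.le hsq hsqpos.le (by positivity : (0:ℝ) ≤ f t ^ 2)]
  -- hence (T - t)⁻² is integrable on Ico a T
  have hg : IntegrableOn (fun t => ((T - t) ^ 2)⁻¹) (Set.Ico a T) volume := by
    have hdom : Integrable
        (fun t => (c ^ 2 / ε) * (f t ^ 2 / (1 - Real.exp (c * (t - T))) ^ 2))
        (volume.restrict (Set.Ico a T)) := by
      exact ((hint.mono_set (Set.Ico_subset_Ico_left ha0)).const_mul _)
    refine hdom.mono' ?_ ?_
    · exact (((measurable_const.sub measurable_id).pow_const 2).inv).aestronglyMeasurable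
    · filter_upwards [ae_restrict_mem measurableSet_Ico] with t ht
      rw [Real.norm_eq_abs, abs_of_nonneg (by positivity)]
      exact key t ht
  -- transfer to (0, T - a) via x ↦ T - x
  have hI : IntervalIntegrable (fun t => ((T - t) ^ 2)⁻¹) volume a T :=
    (intervalIntegrable_iff_integrableOn_Ioo_of_le haT.le).2
      (hg.mono_set Set.Ioo_subset_Ico_self)
  have hI2 : IntervalIntegrable (fun x => (x ^ 2)⁻¹) volume 0 (T - a) := by
    have := (hI.comp_sub_left T).symm
    simpa using this
  have hI3 : IntegrableOn (fun x => (x ^ 2)⁻¹) (Set.Ioo 0 (T - a)) volume :=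
    (intervalIntegrable_iff_integrableOn_Ioo_of_le (by linarith)).1 hI2
  have hI4 : IntegrableOn (fun x : ℝ => x ^ (-2 : ℝ)) (Set.Ioo 0 (T - a)) volume := by
    refine hI3.congr_fun (fun x hx => ?_) measurableSet_Ioo
    rw [Real.rpow_neg (le_of_lt hx.1), Real.rpow_two]
  have := (intervalIntegral.integrableOn_Ioo_rpow_iff (by linarith : (0:ℝ) < T - a)).1 hI4
  norm_num at this
end

section
/- Let T > 0, a ∈ ℝ, and let f : [0, T] → ℝ be continuous. Define τ = inf({t ∈ [0,T] : f(t) > a} ∪ {T}) and τ̲ = inf({t ∈ [0,T] : f(t) ≥ a} ∪ {T}). If τ̲ < τ, then either there exist rational numbers s < r in [0, T] such that f(t) = a for all t ∈ [s, r], or there exists a rational number r ∈ (τ̲, τ) with f(r) < a. -/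
/-- Deterministic dichotomy behind the quasi-continuity of hitting times: if the
hitting time `τ̲` of level `a` (with `≥`) is strictly smaller than the hitting time `τ`
(with `>`), then either the path equals `a` on a rational time interval, or the path
is strictly below `a` at some rational time between the two hitting times. -/
theorem hitting_time_dichotomy
    (T a : ℝ) (hT : 0 < T) (f : ℝ → ℝ) (hf : ContinuousOn f (Set.Icc 0 T)) :
    let τ : ℝ := sInf ({t ∈ Set.Icc 0 T | f t > a} ∪ {T})
    let τ' : ℝ := sInf ({t ∈ Set.Icc 0 T | f t ≥ a} ∪ {T})
    τ' < τ →
      (∃ s r : ℚ, (s : ℝ) ∈ Set.Icc 0 T ∧ (r : ℝ) ∈ Set.Icc 0 T ∧ (s : ℝ) < r ∧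
          ∀ t ∈ Set.Icc (s : ℝ) (r : ℝ), f t = a) ∨
        ∃ r : ℚ, (r : ℝ) ∈ Set.Ioo τ' τ ∧ f r < a := by
  intro τ τ' h
  have hbdd : BddBelow ({t ∈ Set.Icc 0 T | f t > a} ∪ {T}) := by
    refine ⟨0, ?_⟩
    rintro x (⟨⟨hx0, _⟩, _⟩ | rfl)
    · exact hx0
    · exact hT.le
  have hbdd' : BddBelow ({t ∈ Set.Icc 0 T | f t ≥ a} ∪ {T}) := by
    refine ⟨0, ?_⟩
    rintro x (⟨⟨hx0, _⟩, _⟩ | rfl)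
    · exact hx0
    · exact hT.le
  have hτ'0 : 0 ≤ τ' := by
    refine le_csInf ⟨T, Or.inr rfl⟩ ?_
    rintro x (⟨⟨hx0, _⟩, _⟩ | rfl)
    · exact hx0
    · exact hT.le
  have hτT : τ ≤ T := csInf_le hbdd (Or.inr rfl)
  -- On (τ', τ), f ≤ a
  have hle : ∀ t ∈ Set.Ioo τ' τ, f t ≤ a := by
    intro t ht
    by_contra hgt
    push_neg at hgt
    have : τ ≤ t :=
      csInf_le hbdd (Or.inl ⟨⟨hτ'0.trans ht.1.le, ht.2.le.trans hτT⟩, hgt⟩)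
    exact absurd ht.2 (not_lt.mpr this)
  by_cases hcase : ∃ r : ℚ, (r : ℝ) ∈ Set.Ioo τ' τ ∧ f r < a
  · exact Or.inr hcase
  push_neg at hcase
  left
  -- f = a on (τ', τ)
  have heq : ∀ t ∈ Set.Ioo τ' τ, f t = a := by
    intro t ht
    rcases lt_or_eq_of_le (hle t ht) with hlt | hEq
    · exfalso
      have htT : t ∈ Set.Ioo (0 : ℝ) T := ⟨lt_of_le_of_lt hτ'0 ht.1, lt_of_lt_of_le ht.2 hτT⟩
      have hct : ContinuousAt f t := by
        refine hf.continuousAt ?_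
        exact Icc_mem_nhds htT.1 htT.2
      have hev : ∀ᶠ x in nhds t, f x < a ∧ x ∈ Set.Ioo τ' τ := by
        have h1 : ∀ᶠ x in nhds t, f x < a := hct.eventually_lt continuousAt_const hlt
        have h2 : ∀ᶠ x in nhds t, x ∈ Set.Ioo τ' τ := isOpen_Ioo.eventually_mem ht
        exact h1.and h2
      rcases eventually_nhds_iff.mp hev with ⟨s, hs, hso, hts⟩
      rcases Rat.denseRange_cast.exists_mem_open hso ⟨t, hts⟩ with ⟨q, hq⟩
      obtain ⟨hq1, hq2⟩ := hs _ hq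
      exact absurd hq1 (not_lt.mpr (hcase q hq2))
    · exact hEq
  obtain ⟨q1, hq1⟩ := exists_rat_btwn h
  obtain ⟨q2, hq2⟩ := exists_rat_btwn hq1.2
  have hq1m : (q1 : ℝ) ∈ Set.Icc 0 T := ⟨hτ'0.trans hq1.1.le, hq1.2.le.trans hτT⟩
  have hq2m : (q2 : ℝ) ∈ Set.Icc 0 T := ⟨hτ'0.trans (hq1.1.trans hq2.1).le, hq2.2.le.trans hτT⟩
  refine ⟨q1, q2, hq1m, hq2m, by exact_mod_cast hq2.1, ?_⟩
  intro t ht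
  exact heq t ⟨hq1.1.trans_le ht.1, ht.2.trans_lt hq2.2⟩
end

section
/- Let E be a metric space, T > 0, and let M : E × [0, T] → ℝ be jointly continuous with M(ω, 0) < a for every ω ∈ E, where a ∈ ℝ. Define τ_a(ω) = inf({t ∈ (0, T] : M(ω, t) > a} ∪ {T}) and τ̲_a(ω) = inf({t ∈ (0, T] : M(ω, t) ≥ a} ∪ {T}). Then τ_a : E → ℝ is upper semicontinuous (equivalently, −τ_a is lower semicontinuous) and τ̲_a : E → ℝ is lower semicontinuous. -/
/-!
Both hitting times are infima of the times at which a condition on `ω` holds. Strictly exceeding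
`a` at a fixed time is an open condition in `ω`, so `τ_a` is an infimum of upper semicontinuous
functions. For `τ̲_a`, below `τ̲_a(ω₀)` the path `M(ω₀, ·)` stays in the open set `{M < a}` on a
compact interval `[0, y']`; the tube lemma keeps nearby paths there too, so their hitting times
are at least `y'`.
-/

open Set Filter Topology

section HittingTime

variable {X α : Type*} [TopologicalSpace X] [ConditionallyCompleteLinearOrder α]

theorem upperSemicontinuous_sInf_setOf_mem_isOpen {s : Set α} (hs : BddBelow s) (b : α)
    {U : α → Set X} (hU : ∀ t ∈ s, IsOpen (U t)) :
    UpperSemicontinuous fun x => sInf ({t ∈ s | x ∈ U t} ∪ {b}) := by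
  intro x₀ y hy
  have hbdd : ∀ x, BddBelow ({t ∈ s | x ∈ U t} ∪ {b}) := fun x =>
    (hs.mono (sep_subset _ _)).union bddBelow_singleton
  obtain ⟨t, ht, hty⟩ := exists_lt_of_csInf_lt ⟨b, Or.inr rfl⟩ hy
  rcases ht with ⟨hts, htU⟩ | rfl
  · filter_upwards [(hU t hts).mem_nhds htU] with x hx
    exact (csInf_le (hbdd x) (Or.inl ⟨hts, hx⟩)).trans_lt hty
  · exact Eventually.of_forall fun x => (csInf_le (hbdd x) (Or.inr rfl)).trans_lt hty

theorem lowerSemicontinuous_sInf_setOf_notMem_isOpen [TopologicalSpace α] [OrderTopology α]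
    [DenselyOrdered α] {t₀ T : α} {V : Set (X × α)} (hV : IsOpen V)
    (hstart : ∀ x, (x, t₀) ∈ V) :
    LowerSemicontinuous fun x => sInf ({t ∈ Ioc t₀ T | (x, t) ∉ V} ∪ {T}) := by
  intro x₀ y hy
  have hbdd : ∀ x, BddBelow ({t ∈ Ioc t₀ T | (x, t) ∉ V} ∪ {T}) := fun x =>
    (bddBelow_Ioc.mono (sep_subset _ _)).union bddBelow_singleton
  obtain ⟨y', hyy', hy'⟩ := exists_between hy
  have hy'T : y' ≤ T := hy'.le.trans (csInf_le (hbdd x₀) (Or.inr rfl))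
  have hpath : {x₀} ×ˢ Icc t₀ y' ⊆ V := by
    rintro ⟨x, t⟩ ⟨rfl, ht⟩
    rcases ht.1.eq_or_lt with rfl | hpos
    · exact hstart x
    · by_contra hnot
      exact hy'.not_ge <|
        (csInf_le (hbdd x) (Or.inl ⟨⟨hpos, ht.2.trans hy'T⟩, hnot⟩)).trans ht.2
  obtain ⟨u, v, hu, -, hx₀u, hIv, huv⟩ :=
    generalized_tube_lemma isCompact_singleton isCompact_Icc hV hpath
  filter_upwards [hu.mem_nhds (hx₀u rfl)] with x hx
  refine hyy'.trans_le (le_csInf ⟨T, Or.inr rfl⟩ ?_)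
  rintro t (⟨ht, hnot⟩ | rfl)
  · by_contra! hlt
    exact hnot (huv ⟨hx, hIv ⟨ht.1.le, hlt.le⟩⟩)
  · exact hy'T

end HittingTime

/-- Semicontinuity of hitting times (Lemma A.1): if `M : E × [0,T] → ℝ` is jointly
continuous and `M(ω,0) < a`, then `τ_a = inf{t ∈ (0,T] : M(ω,t) > a} ∧ T` is upper
semicontinuous and `τ̲_a = inf{t ∈ (0,T] : M(ω,t) ≥ a} ∧ T` is lower semicontinuous. -/
theorem hitting_times_semicontinuous
    {E : Type*} [MetricSpace E] (T a : ℝ) (hT : 0 < T) (M : E → ℝ → ℝ)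
    (hM : ContinuousOn (fun p : E × ℝ => M p.1 p.2) (Set.univ ×ˢ Set.Icc 0 T))
    (h0 : ∀ ω : E, M ω 0 < a) :
    UpperSemicontinuous (fun ω : E => sInf ({t ∈ Set.Ioc 0 T | M ω t > a} ∪ {T})) ∧
      LowerSemicontinuous (fun ω : E => sInf ({t ∈ Set.Ioc 0 T | M ω t ≥ a} ∪ {T})) := by
  have hslice : ∀ t ∈ Icc 0 T, Continuous fun ω => M ω t := fun t ht =>
    hM.comp_continuous (continuous_id.prodMk continuous_const) fun _ => ⟨trivial, ht⟩
  obtain ⟨V, hV, hVeq⟩ := continuousOn_iff'.1 hM (Iio a) isOpen_Iio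
  have hmemV : ∀ ω, ∀ t ∈ Icc 0 T, (ω, t) ∈ V ↔ M ω t < a := fun ω t ht => by
    simpa [ht] using (Set.ext_iff.1 hVeq (ω, t)).symm
  refine ⟨upperSemicontinuous_sInf_setOf_mem_isOpen bddBelow_Ioc T
    (U := fun t => {ω | a < M ω t}) fun t ht =>
      isOpen_lt continuous_const (hslice t (Ioc_subset_Icc_self ht)), ?_⟩
  have hset : ∀ ω, {t ∈ Ioc 0 T | M ω t ≥ a} = {t ∈ Ioc 0 T | (ω, t) ∉ V} := fun ω => by
    ext t
    refine and_congr_right fun ht => ?_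
    rw [hmemV ω t (Ioc_subset_Icc_self ht), not_lt, ge_iff_le]
  simp only [hset]
  exact lowerSemicontinuous_sInf_setOf_notMem_isOpen hV fun ω =>
    (hmemV ω 0 (left_mem_Icc.2 hT.le)).2 (h0 ω)
end

section
/- Let Ω be a metric space and let 𝒫 be a nonempty set of Borel probability measures on Ω that is compact in the topology of weak convergence of measures. Define the capacity c(A) = sup_{P∈𝒫} P(A) for Borel sets A ⊆ Ω. Then for every closed set F ⊆ Ω, c(F) = inf{ c(O) : O open, F ⊆ O }. -/
open MeasureTheory Filter Metric

/-- Outer regularity of the capacity `c(A) = sup_{P∈𝒫} P(A)` on closed sets, for a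
weakly compact nonempty family `𝒫` of Borel probability measures on a metric space. -/
theorem capacity_outer_regular_on_closed
    {Ω : Type*} [MetricSpace Ω] [MeasurableSpace Ω] [BorelSpace Ω]
    (Ps : Set (ProbabilityMeasure Ω)) (hne : Ps.Nonempty) (hcomp : IsCompact Ps)
    (F : Set Ω) (hF : IsClosed F) :
    (⨆ P ∈ Ps, (P : Measure Ω) F) =
      ⨅ O ∈ {O : Set Ω | IsOpen O ∧ F ⊆ O}, ⨆ P ∈ Ps, (P : Measure Ω) O := by
  set s := ⨆ P ∈ Ps, (P : Measure Ω) F with hs_def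
  have hs_le : ∀ P ∈ Ps, (P : Measure Ω) F ≤ s := fun P hP => le_biSup (fun P : ProbabilityMeasure Ω => (P : Measure Ω) F) hP
  have hs_top : s ≠ ⊤ := by
    have h1 : s ≤ 1 := iSup₂_le fun P hP => prob_le_one
    exact (h1.trans_lt ENNReal.one_lt_top).ne
  refine le_antisymm (le_iInf₂ fun O hO => iSup₂_mono fun P hP => measure_mono hO.2) ?_
  refine ENNReal.le_of_forall_pos_le_add fun ε hε _ => ?_
  by_contra hcon
  push_neg at hcon
  have : Nonempty (ProbabilityMeasure Ω) := ⟨hne.choose⟩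
  have key : ∀ δ : ℝ, 0 < δ → ∃ P ∈ Ps, s + ε < (P : Measure Ω) (thickening δ F) := by
    intro δ hδ
    have hmem : thickening δ F ∈ {O : Set Ω | IsOpen O ∧ F ⊆ O} :=
      ⟨isOpen_thickening, self_subset_thickening hδ F⟩
    have := (biInf_le (fun O => ⨆ P ∈ Ps, (P : Measure Ω) O) hmem).trans_lt' hcon
    simpa [lt_iSup_iff] using this
  choose! f hfPs hf using key
  set l₀ : Filter ℝ := nhdsWithin 0 (Set.Ioi 0) with hl₀
  have hmapne : (Filter.map f l₀).NeBot := map_neBot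
  have hmaple : Filter.map f l₀ ≤ Filter.principal Ps := by
    rw [le_principal_iff, mem_map]
    filter_upwards [self_mem_nhdsWithin] with δ hδ using hfPs δ hδ
  obtain ⟨Q, hQPs, hQ⟩ := hcomp hmaple
  obtain ⟨U, hUle, hUt⟩ := mapClusterPt_iff_ultrafilter.mp hQ
  -- For every m > 0, Q (cthickening m F) ≥ s + ε
  have hQm : ∀ m : ℝ, 0 < m → s + ε ≤ (Q : Measure Ω) (cthickening m F) := by
    intro m hm
    have hport := ProbabilityMeasure.limsup_measure_closed_le_of_tendsto hUt
      (isClosed_cthickening (δ := m) (E := F))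
    refine le_trans ?_ hport
    have hev : ∀ᶠ δ in (U : Filter ℝ),
        s + ε ≤ ((f δ : ProbabilityMeasure Ω) : Measure Ω) (cthickening m F) := by
      filter_upwards [hUle (inter_mem self_mem_nhdsWithin
        (mem_nhdsWithin_of_mem_nhds (Metric.ball_mem_nhds 0 hm)))] with δ hδ
      obtain ⟨hδ0, hδm⟩ := hδ
      have hsub : thickening δ F ⊆ cthickening m F :=
        (thickening_subset_cthickening δ F).trans
          (cthickening_mono (by have := mem_ball_zero_iff.mp hδm; rw [Real.norm_eq_abs, abs_of_pos hδ0] at this; exact this.le) F)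
      exact (hf δ hδ0).le.trans (measure_mono hsub)
    exact le_limsup_of_frequently_le hev.frequently
  -- Q F ≥ s + ε by letting m → 0
  have htend : Tendsto (fun m => (Q : Measure Ω) (cthickening m F)) (nhdsWithin 0 (Set.Ioi 0))
      (nhds ((Q : Measure Ω) F)) := by
    have := tendsto_measure_cthickening_of_isClosed (μ := (Q : Measure Ω)) (s := F)
      ⟨1, one_pos, measure_ne_top _ _⟩ hF
    exact this.mono_left nhdsWithin_le_nhds
  have hQF : s + ε ≤ (Q : Measure Ω) F := by
    refine ge_of_tendsto htend ?_
    filter_upwards [self_mem_nhdsWithin] with m hm using hQm m hm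
  have : s < s + ε := ENNReal.lt_add_right hs_top (by exact_mod_cast hε.ne')
  exact absurd (hQF.trans (hs_le Q hQPs)) this.not_ge
end

section
/- Let 𝒫 be a nonempty set of probability measures on a measurable space (Ω, ℱ). Let X_n, X : Ω → ℝ (n ≥ 1) be measurable functions that are P-integrable for every P ∈ 𝒫, with the family { ∫ X dP : P ∈ 𝒫 } bounded above. Suppose there is a measurable set N with sup_{P∈𝒫} P(N) = 0 such that for every ω ∉ N the sequence (X_n(ω)) is nondecreasing and converges to X(ω). Then the sequence sup_{P∈𝒫} ∫ X_n dP is nondecreasing and converges to sup_{P∈𝒫} ∫ X dP. -/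
open MeasureTheory Filter

/-!
Since `sup_P P(N) = 0`, the set `N` is `P`-null for every `P ∈ 𝒫`, so for each `P` the classical
monotone convergence theorem gives `∫ X_n dP ↑ ∫ X dP`. It remains to interchange the supremum over
`P` with the limit in `n`, which is legitimate for any family of nondecreasing sequences whose limits
are bounded above: given `a < sup_P ∫ X dP`, pick `P` with `a < ∫ X dP`; then `a < ∫ X_n dP` for
all large `n`.
-/

section SupOfMonotone

variable {ι α β : Type*} [ConditionallyCompleteLinearOrder α] [TopologicalSpace α] [OrderTopology α]
  [Preorder β] [IsDirectedOrder β] {f : ι → β → α} {g : ι → α}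

theorem bddAbove_range_apply_of_monotone_of_tendsto (hf : ∀ i, Monotone (f i))
    (hg : ∀ i, Tendsto (f i) atTop (nhds (g i))) (hbdd : BddAbove (Set.range g)) (n : β) :
    BddAbove (Set.range fun i => f i n) := by
  obtain ⟨c, hc⟩ := hbdd
  exact ⟨c, Set.forall_mem_range.2 fun i => ((hf i).ge_of_tendsto (hg i) n).trans (hc ⟨i, rfl⟩)⟩

theorem monotone_ciSup_of_monotone_of_tendsto (hf : ∀ i, Monotone (f i))
    (hg : ∀ i, Tendsto (f i) atTop (nhds (g i))) (hbdd : BddAbove (Set.range g)) :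
    Monotone fun n => ⨆ i, f i n := fun _ n hmn =>
  ciSup_mono (bddAbove_range_apply_of_monotone_of_tendsto hf hg hbdd n) fun i => hf i hmn

theorem tendsto_ciSup_of_monotone_of_tendsto [Nonempty ι] [Nonempty β]
    (hf : ∀ i, Monotone (f i)) (hg : ∀ i, Tendsto (f i) atTop (nhds (g i)))
    (hbdd : BddAbove (Set.range g)) :
    Tendsto (fun n => ⨆ i, f i n) atTop (nhds (⨆ i, g i)) := by
  refine tendsto_order.2 ⟨fun a ha => ?_, fun b hb => Eventually.of_forall fun n => ?_⟩
  · obtain ⟨i, hi⟩ := exists_lt_of_lt_ciSup ha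
    filter_upwards [(hg i).eventually (eventually_gt_nhds hi)] with n hn
    exact hn.trans_le (le_ciSup (bddAbove_range_apply_of_monotone_of_tendsto hf hg hbdd n) i)
  · refine lt_of_le_of_lt (ciSup_le fun i => ?_) hb
    exact ((hf i).ge_of_tendsto (hg i) n).trans (le_ciSup hbdd i)

end SupOfMonotone

theorem MeasureTheory.ae_notMem_of_iSup_measure_eq_zero {Ω ι : Type*} [MeasurableSpace Ω]
    {μ : ι → Measure Ω} {N : Set Ω} (hN : ⨆ i, μ i N = 0) (i : ι) : ∀ᵐ ω ∂μ i, ω ∉ N :=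
  measure_eq_zero_iff_ae_notMem.1 (ENNReal.iSup_eq_zero.1 hN i)

theorem monotone_convergence_upper_expectation_general
    {Ω : Type*} [MeasurableSpace Ω] (Ps : Set (Measure Ω)) (hne : Ps.Nonempty)
    (X : ℕ → Ω → ℝ) (X₀ : Ω → ℝ)
    (hXint : ∀ n, ∀ P ∈ Ps, Integrable (X n) P)
    (hX₀int : ∀ P ∈ Ps, Integrable X₀ P)
    (hbdd : BddAbove (Set.range fun P : Ps => ∫ ω, X₀ ω ∂(P : Measure Ω)))
    (N : Set Ω)
    (hNnull : (⨆ P : Ps, (P : Measure Ω) N) = 0)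
    (hmono : ∀ ω ∉ N, Monotone fun n => X n ω)
    (hconv : ∀ ω ∉ N, Tendsto (fun n => X n ω) atTop (nhds (X₀ ω))) :
    (Monotone fun n => ⨆ P : Ps, ∫ ω, X n ω ∂(P : Measure Ω)) ∧
      Tendsto (fun n => ⨆ P : Ps, ∫ ω, X n ω ∂(P : Measure Ω)) atTop
        (nhds (⨆ P : Ps, ∫ ω, X₀ ω ∂(P : Measure Ω))) := by
  have : Nonempty Ps := hne.to_subtype
  have hae (P : Ps) := ae_notMem_of_iSup_measure_eq_zero hNnull P
  have hint_mono (P : Ps) : Monotone fun n => ∫ ω, X n ω ∂(P : Measure Ω) := fun m n hmn =>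
    integral_mono_ae (hXint m P P.2) (hXint n P P.2) ((hae P).mono fun ω hω => hmono ω hω hmn)
  have hint_tendsto (P : Ps) :
      Tendsto (fun n => ∫ ω, X n ω ∂(P : Measure Ω)) atTop (nhds (∫ ω, X₀ ω ∂(P : Measure Ω))) :=
    integral_tendsto_of_tendsto_of_monotone (fun n => hXint n P P.2) (hX₀int P P.2)
      ((hae P).mono hmono) ((hae P).mono hconv)
  exact ⟨monotone_ciSup_of_monotone_of_tendsto hint_mono hint_tendsto hbdd,
    tendsto_ciSup_of_monotone_of_tendsto hint_mono hint_tendsto hbdd⟩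

/-- Monotone convergence for an upper expectation: if `X_n ↑ X` quasi-surely, then
`sup_{P∈𝒫} ∫ X_n dP` is nondecreasing and converges to `sup_{P∈𝒫} ∫ X dP`. -/
theorem monotone_convergence_upper_expectation
    {Ω : Type*} [MeasurableSpace Ω] (Ps : Set (Measure Ω)) (hne : Ps.Nonempty)
    (hprob : ∀ P ∈ Ps, IsProbabilityMeasure P)
    (X : ℕ → Ω → ℝ) (X₀ : Ω → ℝ)
    (hXmeas : ∀ n, Measurable (X n)) (hX₀meas : Measurable X₀)
    (hXint : ∀ n, ∀ P ∈ Ps, Integrable (X n) P)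
    (hX₀int : ∀ P ∈ Ps, Integrable X₀ P)
    (hbdd : BddAbove (Set.range fun P : Ps => ∫ ω, X₀ ω ∂(P : Measure Ω)))
    (N : Set Ω) (hNmeas : MeasurableSet N)
    (hNnull : (⨆ P : Ps, (P : Measure Ω) N) = 0)
    (hmono : ∀ ω ∉ N, Monotone fun n => X n ω)
    (hconv : ∀ ω ∉ N, Tendsto (fun n => X n ω) atTop (nhds (X₀ ω))) :
    (Monotone fun n => ⨆ P : Ps, ∫ ω, X n ω ∂(P : Measure Ω)) ∧
      Tendsto (fun n => ⨆ P : Ps, ∫ ω, X n ω ∂(P : Measure Ω)) atTop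
        (nhds (⨆ P : Ps, ∫ ω, X₀ ω ∂(P : Measure Ω))) :=
  monotone_convergence_upper_expectation_general Ps hne X X₀ hXint hX₀int hbdd N hNnull hmono hconv
end

section
/- Let Ω be a metric space and let 𝒫 be a nonempty set of Borel probability measures on Ω that is compact in the topology of weak convergence of measures; define the capacity c(A) = sup_{P∈𝒫} P(A). Let M > 0 and let X_n : Ω → ℝ (n ≥ 1) be Borel functions with |X_n(ω)| ≤ M for all n and ω, each X_n quasi-continuous (for every ε > 0 there is an open set G ⊆ Ω with c(G) < ε such that X_n restricted to Gᶜ is continuous), and suppose X_n(ω) decreases to X(ω) for every ω ∈ Ω. Then sup_{P∈𝒫} ∫ X_n dP decreases to sup_{P∈𝒫} ∫ X dP. -/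
/-!
Off an open set of small capacity, a quasi-continuous `X n` agrees with a bounded continuous
function (Tietze), so `P ↦ ∫ X n dP` is a uniform limit of weakly continuous functions on `𝒫`
and hence continuous. For continuous functions `F n` decreasing pointwise on a compact space,
the infimum `L` of their suprema is reached at a point common to the nested compact sets
`{F n ≥ L}`; the limit is `≥ L` there, so the suprema converge to the supremum of the limit.
-/

open MeasureTheory Filter Set Topology
open scoped BoundedContinuousFunction

def IsQuasiContinuous {Ω : Type*} [TopologicalSpace Ω] [MeasurableSpace Ω]
    (Ps : Set (ProbabilityMeasure Ω)) (f : Ω → ℝ) : Prop :=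
  ∀ ε : ℝ, 0 < ε → ∃ G : Set Ω, IsOpen G ∧
    (⨆ P ∈ Ps, (P : Measure Ω) G) < ENNReal.ofReal ε ∧ ContinuousOn f Gᶜ

theorem BoundedContinuousFunction.exists_eqOn_abs_le_of_continuousOn {Y : Type*}
    [TopologicalSpace Y] [NormalSpace Y] {s : Set Y} (hs : IsClosed s) {f : Y → ℝ}
    (hf : ContinuousOn f s) {M : ℝ} (hM : 0 ≤ M) (hb : ∀ y ∈ s, |f y| ≤ M) :
    ∃ g : Y →ᵇ ℝ, EqOn g f s ∧ ∀ y, |g y| ≤ M := by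
  let f₀ : s →ᵇ ℝ :=
    ofNormedAddCommGroup (s.domRestrict f) hf.domRestrict M fun y => hb y y.2
  obtain ⟨g, hgM, hgf⟩ := exists_forall_mem_domRestrict_eq_of_closed f₀ hs
    (t := Icc (-M) M) (fun y => abs_le.1 (hb y y.2)) (nonempty_Icc.2 (by linarith))
  exact ⟨g, fun y hy => DFunLike.congr_fun hgf ⟨y, hy⟩, fun y => abs_le.2 (hgM y)⟩

theorem abs_integral_sub_le_of_eqOn_compl {α : Type*} [MeasurableSpace α] {μ : Measure α}
    [IsFiniteMeasure μ] {f g : α → ℝ} {s : Set α} {C : ℝ} (hf : Integrable f μ)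
    (hg : Integrable g μ) (hfg : EqOn f g sᶜ) (hC : ∀ x ∈ s, |f x - g x| ≤ C) :
    |∫ x, f x ∂μ - ∫ x, g x ∂μ| ≤ C * (μ s).toReal := by
  rw [← integral_sub hf hg,
    ← setIntegral_eq_integral_of_forall_compl_eq_zero fun x hx => sub_eq_zero.2 (hfg hx)]
  exact norm_setIntegral_le_of_norm_le_const (f := fun x => f x - g x) (measure_lt_top μ s) hC

theorem ProbabilityMeasure.continuousOn_integral_of_isQuasiContinuous {Ω : Type*}
    [TopologicalSpace Ω] [NormalSpace Ω] [MeasurableSpace Ω] [OpensMeasurableSpace Ω]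
    {Ps : Set (ProbabilityMeasure Ω)} {f : Ω → ℝ} {M : ℝ} (hf : Measurable f)
    (hb : ∀ ω, |f ω| ≤ M) (hqc : IsQuasiContinuous Ps f) :
    ContinuousOn (fun P : ProbabilityMeasure Ω => ∫ ω, f ω ∂(P : Measure Ω)) Ps := by
  refine continuousOn_of_uniform_approx_of_continuousOn fun u hu => ?_
  obtain ⟨ε, hε, hεu⟩ := Metric.mem_uniformity_dist.1 hu
  have hb' : ∀ ω, |f ω| ≤ |M| := fun ω => (hb ω).trans (le_abs_self M)
  set C := 2 * |M| + 1
  have hC : 0 < C := by positivity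
  obtain ⟨G, hGopen, hGcap, hfG⟩ := hqc (ε / C) (by positivity)
  obtain ⟨g, hgf, hgb⟩ := BoundedContinuousFunction.exists_eqOn_abs_le_of_continuousOn
    hGopen.isClosed_compl hfG (abs_nonneg M) fun ω _ => hb' ω
  refine ⟨fun P => ∫ ω, g ω ∂(P : Measure Ω),
    (ProbabilityMeasure.continuous_integral_boundedContinuousFunction g).continuousOn,
    fun P hP => hεu ?_⟩
  have hPG : ((P : Measure Ω) G).toReal < ε / C := by
    refine ENNReal.toReal_lt_of_lt_ofReal (lt_of_le_of_lt ?_ hGcap)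
    exact le_iSup₂ (f := fun (Q : ProbabilityMeasure Ω) _ => (Q : Measure Ω) G) P hP
  have hfg : ∀ ω ∈ G, |f ω - g ω| ≤ C := fun ω _ =>
    (abs_sub (f ω) (g ω)).trans (by linarith [hb' ω, hgb ω])
  rw [Real.dist_eq]
  calc |∫ ω, f ω ∂(P : Measure Ω) - ∫ ω, g ω ∂(P : Measure Ω)|
      ≤ C * ((P : Measure Ω) G).toReal :=
        abs_integral_sub_le_of_eqOn_compl (.of_bound hf.aestronglyMeasurable M (ae_of_all _ hb))
          (g.integrable _) (fun ω hω => (hgf hω).symm) hfg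
    _ < C * (ε / C) := by gcongr
    _ = ε := by field_simp

theorem antitone_ciSup_of_antitone {ι α : Type*} [Preorder α] {F : α → ι → ℝ}
    (hbdd : ∀ a, BddAbove (range (F a))) (hanti : ∀ i, Antitone (F · i)) :
    Antitone fun a => ⨆ i, F a i :=
  fun _ _ hab => ciSup_mono (hbdd _) fun i => hanti i hab

theorem tendsto_iSup_of_antitone_of_compactSpace {K : Type*} [TopologicalSpace K]
    [CompactSpace K] {F : ℕ → K → ℝ} {G : K → ℝ} (hF : ∀ n, Continuous (F n))
    (hanti : ∀ x, Antitone (F · x)) (hlim : ∀ x, Tendsto (F · x) atTop (𝓝 (G x))) :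
    Tendsto (fun n => ⨆ x, F n x) atTop (𝓝 (⨆ x, G x)) := by
  rcases isEmpty_or_nonempty K with hK | hK
  · simpa only [Real.iSup_of_isEmpty] using tendsto_const_nhds
  have hbdd n : BddAbove (range (F n)) := (isCompact_range (hF n)).bddAbove
  have hGF n x : G x ≤ F n x := (hanti x).le_of_tendsto (hlim x) n
  have hGbdd : BddAbove (range G) :=
    ⟨⨆ x, F 0 x, forall_mem_range.2 fun x => (hGF 0 x).trans (le_ciSup (hbdd 0) x)⟩
  set s := fun n => ⨆ x, F n x
  have hGs n : ⨆ x, G x ≤ s n := ciSup_mono (hbdd n) (hGF n)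
  have hsbdd : BddBelow (range s) := ⟨_, forall_mem_range.2 hGs⟩
  have hs := tendsto_atTop_ciInf (antitone_ciSup_of_antitone hbdd hanti) hsbdd
  set L := ⨅ n, s n
  suffices L ≤ ⨆ x, G x by rwa [le_antisymm this (le_ciInf hGs)] at hs
  have hclosed n : IsClosed {x | L ≤ F n x} := isClosed_le continuous_const (hF n)
  obtain ⟨x, hx⟩ : (⋂ n, {x | L ≤ F n x}).Nonempty := by
    refine IsCompact.nonempty_iInter_of_sequence_nonempty_isCompact_isClosed _
      (fun n x hx => hx.trans (hanti x n.le_succ)) (fun n => ?_) (hclosed 0).isCompact hclosed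
    obtain ⟨x, -, hx⟩ := isCompact_univ.exists_isMaxOn univ_nonempty (hF n).continuousOn
    exact ⟨x, (ciInf_le hsbdd n).trans (ciSup_le fun y => hx (mem_univ y))⟩
  exact (ge_of_tendsto' (hlim x) (mem_iInter.1 hx)).trans (le_ciSup hGbdd x)

theorem downward_monotone_convergence_upper_expectation_general
    {Ω : Type*} [MetricSpace Ω] [MeasurableSpace Ω] [BorelSpace Ω]
    (Ps : Set (ProbabilityMeasure Ω)) (hcomp : IsCompact Ps)
    (M : ℝ) (X : ℕ → Ω → ℝ) (X₀ : Ω → ℝ)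
    (hXmeas : ∀ n, Measurable (X n))
    (hXbound : ∀ n ω, |X n ω| ≤ M)
    (hqc : ∀ n, ∀ ε : ℝ, 0 < ε → ∃ G : Set Ω, IsOpen G ∧
      (⨆ P ∈ Ps, (P : Measure Ω) G) < ENNReal.ofReal ε ∧ ContinuousOn (X n) Gᶜ)
    (hanti : ∀ ω, Antitone fun n => X n ω)
    (hconv : ∀ ω, Tendsto (fun n => X n ω) atTop (nhds (X₀ ω))) :
    (Antitone fun n => ⨆ P : Ps, ∫ ω, X n ω ∂(P : Measure Ω)) ∧
      Tendsto (fun n => ⨆ P : Ps, ∫ ω, X n ω ∂(P : Measure Ω)) atTop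
        (nhds (⨆ P : Ps, ∫ ω, X₀ ω ∂(P : Measure Ω))) := by
  have : CompactSpace Ps := isCompact_iff_compactSpace.1 hcomp
  have hbound n (μ : Measure Ω) : ∀ᵐ ω ∂μ, ‖X n ω‖ ≤ M := ae_of_all μ (hXbound n)
  have hint n (P : ProbabilityMeasure Ω) : Integrable (X n) P :=
    .of_bound (hXmeas n).aestronglyMeasurable M (hbound n P)
  have hcont n : Continuous fun P : Ps => ∫ ω, X n ω ∂(P : Measure Ω) :=
    continuousOn_iff_continuous_domRestrict.1 <|
      ProbabilityMeasure.continuousOn_integral_of_isQuasiContinuous (hXmeas n) (hXbound n) (hqc n)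
  have hmono (P : Ps) : Antitone fun n => ∫ ω, X n ω ∂(P : Measure Ω) :=
    fun _ _ hmn => integral_mono (hint _ P) (hint _ P) fun ω => hanti ω hmn
  have hlim (P : Ps) : Tendsto (fun n => ∫ ω, X n ω ∂(P : Measure Ω)) atTop
      (𝓝 (∫ ω, X₀ ω ∂(P : Measure Ω))) :=
    tendsto_integral_of_dominated_convergence (fun _ => M)
      (fun n => (hXmeas n).aestronglyMeasurable) (integrable_const M) (fun n => hbound n P)
      (ae_of_all _ hconv)
  exact ⟨antitone_ciSup_of_antitone (fun n => (isCompact_range (hcont n)).bddAbove) hmono,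
    tendsto_iSup_of_antitone_of_compactSpace hcont hmono hlim⟩

/-- Downward monotone convergence for an upper expectation: for a weakly compact family
`𝒫` of Borel probability measures, if the `X_n` are uniformly bounded, quasi-continuous,
and decrease pointwise to `X`, then `sup_{P∈𝒫} ∫ X_n dP` decreases to `sup_{P∈𝒫} ∫ X dP`. -/
theorem downward_monotone_convergence_upper_expectation
    {Ω : Type*} [MetricSpace Ω] [MeasurableSpace Ω] [BorelSpace Ω]
    (Ps : Set (ProbabilityMeasure Ω)) (hne : Ps.Nonempty) (hcomp : IsCompact Ps)
    (M : ℝ) (hM : 0 < M) (X : ℕ → Ω → ℝ) (X₀ : Ω → ℝ)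
    (hXmeas : ∀ n, Measurable (X n))
    (hXbound : ∀ n ω, |X n ω| ≤ M)
    (hqc : ∀ n, ∀ ε : ℝ, 0 < ε → ∃ G : Set Ω, IsOpen G ∧
      (⨆ P ∈ Ps, (P : Measure Ω) G) < ENNReal.ofReal ε ∧ ContinuousOn (X n) Gᶜ)
    (hanti : ∀ ω, Antitone fun n => X n ω)
    (hconv : ∀ ω, Tendsto (fun n => X n ω) atTop (nhds (X₀ ω))) :
    (Antitone fun n => ⨆ P : Ps, ∫ ω, X n ω ∂(P : Measure Ω)) ∧
      Tendsto (fun n => ⨆ P : Ps, ∫ ω, X n ω ∂(P : Measure Ω)) atTop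
        (nhds (⨆ P : Ps, ∫ ω, X₀ ω ∂(P : Measure Ω))) :=
  downward_monotone_convergence_upper_expectation_general Ps hcomp M X X₀ hXmeas hXbound hqc hanti
    hconv
end

section
/- Let 𝒫 be a nonempty set of probability measures on a measurable space (Ω, ℱ) and let X_n, X : Ω → ℝ (n ≥ 1) be measurable. Assume: (i) uniform integrability, i.e. sup_n sup_{P∈𝒫} ∫_{{|X_n| ≥ c}} |X_n| dP → 0 and sup_{P∈𝒫} ∫_{{|X| ≥ c}} |X| dP → 0 as c → ∞; and (ii) convergence in capacity, i.e. for every ε > 0, sup_{P∈𝒫} P(|X_n − X| > ε) → 0 as n → ∞. Then sup_{P∈𝒫} ∫ |X_n − X| dP → 0 as n → ∞. -/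
open MeasureTheory Filter

/-- Convergence theorem under a sublinear expectation: uniform integrability of `(X_n)`
and of `X`, together with convergence of `X_n` to `X` in capacity, implies convergence
in the `L¹` norm of the upper expectation. -/
theorem ui_and_convergence_in_capacity_implies_L1
    {Ω : Type*} [MeasurableSpace Ω] (Ps : Set (Measure Ω)) (hne : Ps.Nonempty)
    (hprob : ∀ P ∈ Ps, IsProbabilityMeasure P)
    (X : ℕ → Ω → ℝ) (X₀ : Ω → ℝ)
    (hXmeas : ∀ n, Measurable (X n)) (hX₀meas : Measurable X₀)
    (hui : Tendsto
      (fun c : ℝ => ⨆ n : ℕ, ⨆ P : Ps,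
        ∫⁻ ω in {ω | c ≤ |X n ω|}, ENNReal.ofReal |X n ω| ∂(P : Measure Ω))
      atTop (nhds 0))
    (hui₀ : Tendsto
      (fun c : ℝ => ⨆ P : Ps,
        ∫⁻ ω in {ω | c ≤ |X₀ ω|}, ENNReal.ofReal |X₀ ω| ∂(P : Measure Ω))
      atTop (nhds 0))
    (hcap : ∀ ε : ℝ, 0 < ε → Tendsto
      (fun n => ⨆ P : Ps, (P : Measure Ω) {ω | ε < |X n ω - X₀ ω|})
      atTop (nhds 0)) :
    Tendsto
      (fun n => ⨆ P : Ps, ∫⁻ ω, ENNReal.ofReal |X n ω - X₀ ω| ∂(P : Measure Ω))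
      atTop (nhds 0) := by
  rw [ENNReal.tendsto_nhds_zero]
  intro ε hε
  obtain ⟨η, hη, hηε⟩ : ∃ η : ℝ, 0 < η ∧ ENNReal.ofReal η ≤ ε := by
    rcases eq_or_ne ε ⊤ with h | h
    · exact ⟨1, one_pos, by simp [h]⟩
    · exact ⟨ε.toReal, ENNReal.toReal_pos hε.ne' h, by rw [ENNReal.ofReal_toReal h]⟩
  set η4 : ℝ := η / 4 with hη4def
  have hη4 : 0 < η4 := by positivity
  have hη4e : (0 : ENNReal) < ENNReal.ofReal η4 := ENNReal.ofReal_pos.mpr hη4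
  have h1 := (ENNReal.tendsto_nhds_zero.mp hui) (ENNReal.ofReal η4) hη4e
  have h2 := (ENNReal.tendsto_nhds_zero.mp hui₀) (ENNReal.ofReal η4) hη4e
  obtain ⟨c, hc1, hcn, hc0⟩ := ((eventually_ge_atTop (1:ℝ)).and (h1.and h2)).exists
  have hcpos : (0:ℝ) < c := lt_of_lt_of_le one_pos hc1
  set δ : ENNReal := ENNReal.ofReal (η4 / (2 * c)) with hδdef
  have hδpos : (0:ENNReal) < δ := ENNReal.ofReal_pos.mpr (by positivity)
  have hcapn := (ENNReal.tendsto_nhds_zero.mp (hcap η4 hη4)) δ hδpos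
  filter_upwards [hcapn] with n hn
  refine le_trans ?_ hηε
  refine iSup_le fun P => ?_
  have hPprob : IsProbabilityMeasure (P : Measure Ω) := hprob P P.2
  set A : Set Ω := {ω | η4 < |X n ω - X₀ ω|} with hAdef
  have hA : MeasurableSet A :=
    measurableSet_lt measurable_const ((hXmeas n).sub hX₀meas).abs
  have hPA : (P : Measure Ω) A ≤ δ :=
    le_trans (le_iSup (fun P : Ps => (P : Measure Ω) A) P) hn
  have hmeasn : Measurable fun ω => ENNReal.ofReal |X n ω| :=
    (hXmeas n).abs.ennreal_ofReal
  have hmeas0 : Measurable fun ω => ENNReal.ofReal |X₀ ω| :=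
    hX₀meas.abs.ennreal_ofReal
  -- tail bounds
  have htailn : ∫⁻ ω in {ω | c ≤ |X n ω|}, ENNReal.ofReal |X n ω| ∂(P : Measure Ω)
      ≤ ENNReal.ofReal η4 := by
    refine le_trans ?_ hcn
    exact le_trans
      (le_iSup (fun Q : Ps => ∫⁻ ω in {ω | c ≤ |X n ω|}, ENNReal.ofReal |X n ω| ∂(Q : Measure Ω)) P)
      (le_iSup (fun m : ℕ => ⨆ Q : Ps, ∫⁻ ω in {ω | c ≤ |X m ω|}, ENNReal.ofReal |X m ω| ∂(Q : Measure Ω)) n)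
  have htail0 : ∫⁻ ω in {ω | c ≤ |X₀ ω|}, ENNReal.ofReal |X₀ ω| ∂(P : Measure Ω)
      ≤ ENNReal.ofReal η4 :=
    le_trans (le_iSup (fun Q : Ps => ∫⁻ ω in {ω | c ≤ |X₀ ω|}, ENNReal.ofReal |X₀ ω| ∂(Q : Measure Ω)) P) hc0
  -- bound on A for a single function
  have key : ∀ (Y : Ω → ℝ), Measurable Y →
      (∫⁻ ω in {ω | c ≤ |Y ω|}, ENNReal.ofReal |Y ω| ∂(P : Measure Ω)
        ≤ ENNReal.ofReal η4) →
      ∫⁻ ω in A, ENNReal.ofReal |Y ω| ∂(P : Measure Ω)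
        ≤ ENNReal.ofReal c * δ + ENNReal.ofReal η4 := by
    intro Y hY htail
    have hsub : A ⊆ (A ∩ {ω | |Y ω| < c}) ∪ {ω | c ≤ |Y ω|} := by
      intro ω hω
      by_cases h : |Y ω| < c
      · exact Or.inl ⟨hω, h⟩
      · exact Or.inr (le_of_not_gt h)
    calc ∫⁻ ω in A, ENNReal.ofReal |Y ω| ∂(P : Measure Ω)
        ≤ ∫⁻ ω in (A ∩ {ω | |Y ω| < c}) ∪ {ω | c ≤ |Y ω|},
            ENNReal.ofReal |Y ω| ∂(P : Measure Ω) := lintegral_mono_set hsub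
      _ ≤ (∫⁻ ω in A ∩ {ω | |Y ω| < c}, ENNReal.ofReal |Y ω| ∂(P : Measure Ω))
            + ∫⁻ ω in {ω | c ≤ |Y ω|}, ENNReal.ofReal |Y ω| ∂(P : Measure Ω) :=
          lintegral_union_le _ _ _
      _ ≤ ENNReal.ofReal c * δ + ENNReal.ofReal η4 := by
          refine add_le_add ?_ htail
          calc ∫⁻ ω in A ∩ {ω | |Y ω| < c}, ENNReal.ofReal |Y ω| ∂(P : Measure Ω)
              ≤ ∫⁻ _ in A ∩ {ω | |Y ω| < c}, ENNReal.ofReal c ∂(P : Measure Ω) := by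
                refine setLIntegral_mono measurable_const fun ω hω => ?_
                exact ENNReal.ofReal_le_ofReal hω.2.le
            _ = ENNReal.ofReal c * (P : Measure Ω) (A ∩ {ω | |Y ω| < c}) := by
                rw [setLIntegral_const]
            _ ≤ ENNReal.ofReal c * (P : Measure Ω) A := by
                exact mul_le_mul_right (measure_mono Set.inter_subset_left) _
            _ ≤ ENNReal.ofReal c * δ := mul_le_mul_right hPA _
  have hAn := key (X n) (hXmeas n) htailn
  have hA0 := key X₀ hX₀meas htail0
  -- on A, split into |Xn| + |X₀|
  have hAbound : ∫⁻ ω in A, ENNReal.ofReal |X n ω - X₀ ω| ∂(P : Measure Ω)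
      ≤ (ENNReal.ofReal c * δ + ENNReal.ofReal η4)
        + (ENNReal.ofReal c * δ + ENNReal.ofReal η4) := by
    calc ∫⁻ ω in A, ENNReal.ofReal |X n ω - X₀ ω| ∂(P : Measure Ω)
        ≤ ∫⁻ ω in A, (ENNReal.ofReal |X n ω| + ENNReal.ofReal |X₀ ω|)
            ∂(P : Measure Ω) := by
          refine lintegral_mono fun ω => ?_
          calc ENNReal.ofReal |X n ω - X₀ ω|
              ≤ ENNReal.ofReal (|X n ω| + |X₀ ω|) :=
                ENNReal.ofReal_le_ofReal (abs_sub _ _)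
            _ ≤ ENNReal.ofReal |X n ω| + ENNReal.ofReal |X₀ ω| :=
                ENNReal.ofReal_add_le
      _ = (∫⁻ ω in A, ENNReal.ofReal |X n ω| ∂(P : Measure Ω))
            + ∫⁻ ω in A, ENNReal.ofReal |X₀ ω| ∂(P : Measure Ω) :=
          lintegral_add_left hmeasn _
      _ ≤ _ := add_le_add hAn hA0
  -- complement bound
  have hAc : ∫⁻ ω in Aᶜ, ENNReal.ofReal |X n ω - X₀ ω| ∂(P : Measure Ω)
      ≤ ENNReal.ofReal η4 := by
    calc ∫⁻ ω in Aᶜ, ENNReal.ofReal |X n ω - X₀ ω| ∂(P : Measure Ω)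
        ≤ ∫⁻ _ in Aᶜ, ENNReal.ofReal η4 ∂(P : Measure Ω) := by
          refine setLIntegral_mono measurable_const fun ω hω => ?_
          exact ENNReal.ofReal_le_ofReal (le_of_not_gt hω)
      _ = ENNReal.ofReal η4 * (P : Measure Ω) Aᶜ := setLIntegral_const _ _
      _ ≤ ENNReal.ofReal η4 * 1 := mul_le_mul_right prob_le_one _
      _ = ENNReal.ofReal η4 := mul_one _
  have hcδ : ENNReal.ofReal c * δ = ENNReal.ofReal (η4 / 2) := by
    rw [hδdef, ← ENNReal.ofReal_mul hcpos.le]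
    congr 1
    field_simp
  calc ∫⁻ ω, ENNReal.ofReal |X n ω - X₀ ω| ∂(P : Measure Ω)
      = (∫⁻ ω in A, ENNReal.ofReal |X n ω - X₀ ω| ∂(P : Measure Ω))
        + ∫⁻ ω in Aᶜ, ENNReal.ofReal |X n ω - X₀ ω| ∂(P : Measure Ω) :=
        (lintegral_add_compl _ hA).symm
    _ ≤ ((ENNReal.ofReal c * δ + ENNReal.ofReal η4)
          + (ENNReal.ofReal c * δ + ENNReal.ofReal η4)) + ENNReal.ofReal η4 :=
        add_le_add hAbound hAc
    _ ≤ ENNReal.ofReal η := by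
        rw [hcδ, ← ENNReal.ofReal_add (by positivity) hη4.le,
          ← ENNReal.ofReal_add (by positivity) (by positivity),
          ← ENNReal.ofReal_add (by positivity) hη4.le]
        refine ENNReal.ofReal_le_ofReal ?_
        rw [hη4def]
        linarith
end
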